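/- arXiv:2401.04542 — 5 statements merged into one kernel-verified Lean document; each statement's English description precedes it below -/
import Mathlib

section
/- Let G be a finite group, p a prime not dividing |G|, V an F_p[G]-module, and H = V ⋊ G. Then a subgroup of H is normal if and only if it has the form W ⋊ N, where N is a normal subgroup of G and W ⊆ V is an F_p[G]-submodule such that N acts trivially on the quotient module V/W. -/
/-! For normal `M` and `x = (v, g) ∈ M`, the commutator of `x` with `u ∈ V` is `g • u - u`, so
`M ∩ V` is a `G`-stable subgroup modulo which the image `N` of `M` in `G` acts trivially. The power
`x ^ |G|` lies in `M ∩ V` and equals `∑ gⁱ • v ≡ |G| • v` modulo `M ∩ V`; as `|G|` is invertible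
in `𝔽_p`, `v ∈ M ∩ V`. Hence `M = (M ∩ V) ⋊ N`. Conversely, conjugating `(w, n)` by `(a, h)` gives
`(h • w - (hnh⁻¹ • a - a), hnh⁻¹)`. -/

/-- The action of `G` on `V` by additive automorphisms, packaged as a map
`G →* MulAut (Multiplicative V)` suitable for forming the semidirect product `V ⋊ G`. -/
def semidirectAction (G V : Type*) [Group G] [AddCommGroup V] [DistribMulAction G V] :
    G →* MulAut (Multiplicative V) where
  toFun g := AddEquiv.toMultiplicative (DistribMulAction.toAddAut G V g)
  map_one' := by ext v; simp
  map_mul' g h := by ext v; simp [mul_smul]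

open SemidirectProduct Multiplicative
open scoped commutatorElement

lemma AddSubgroup.mem_of_nsmul_mem_of_not_dvd {p : ℕ} [Fact p.Prime] {V : Type*}
    [AddCommGroup V] [Module (ZMod p) V] (A : AddSubgroup V) {n : ℕ} (hn : ¬ p ∣ n) {v : V}
    (hv : n • v ∈ A) : v ∈ A := by
  have hn' : (n : ZMod p) ≠ 0 := by rwa [Ne, ZMod.natCast_eq_zero_iff]
  have := ZMod.smul_mem hv (n : ZMod p)⁻¹
  rwa [← Nat.cast_smul_eq_nsmul (ZMod p), smul_smul, inv_mul_cancel₀ hn', one_smul] at this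

section

variable {G V : Type*} [Group G] [AddCommGroup V] [DistribMulAction G V]

@[simp]
lemma semidirectAction_apply (g : G) (x : Multiplicative V) :
    semidirectAction G V g x = ofAdd (g • toAdd x) := rfl

namespace SemidirectProduct

@[simp]
lemma toAdd_left_mul (x y : Multiplicative V ⋊[semidirectAction G V] G) :
    toAdd (x * y).left = toAdd x.left + x.right • toAdd y.left := rfl

@[simp]
lemma toAdd_left_inv (x : Multiplicative V ⋊[semidirectAction G V] G) :
    toAdd x⁻¹.left = x.right⁻¹ • -toAdd x.left := rfl

lemma right_pow (x : Multiplicative V ⋊[semidirectAction G V] G) (k : ℕ) :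
    (x ^ k).right = x.right ^ k :=
  map_pow rightHom x k

lemma toAdd_left_pow (x : Multiplicative V ⋊[semidirectAction G V] G) (k : ℕ) :
    toAdd (x ^ k).left = ∑ i ∈ Finset.range k, x.right ^ i • toAdd x.left := by
  induction k with
  | zero => rfl
  | succ k ih => rw [pow_succ, toAdd_left_mul, ih, right_pow, Finset.sum_range_succ]

lemma commutatorElement_inl (x : Multiplicative V ⋊[semidirectAction G V] G) (u : V) :
    ⁅x, inl (ofAdd u)⁆ =
      (inl (ofAdd (x.right • u - u)) : Multiplicative V ⋊[semidirectAction G V] G) := by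
  ext
  · rw [left_inl]
    apply toAdd.injective
    simp only [commutatorElement_def, toAdd_left_mul, toAdd_left_inv, mul_right, inv_right,
      left_inl, right_inl, toAdd_ofAdd, inv_one, one_smul, mul_one, mul_smul, smul_neg,
      smul_inv_smul]
    congr 1
    abel
  · simp only [commutatorElement_def, mul_right, inv_right, right_inl]
    group

lemma toAdd_left_conj (g x : Multiplicative V ⋊[semidirectAction G V] G) :
    toAdd (g * x * g⁻¹).left =
      g.right • toAdd x.left - ((g.right * x.right * g.right⁻¹) • toAdd g.left - toAdd g.left) := by
  simp only [toAdd_left_mul, toAdd_left_inv, mul_right, mul_smul, smul_neg]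
  abel

end SemidirectProduct

/-- `M ∩ V`, as a subgroup of `V`. -/
def vectorPart (M : Subgroup (Multiplicative V ⋊[semidirectAction G V] G)) : AddSubgroup V where
  carrier := {v | inl (ofAdd v) ∈ M}
  add_mem' ha hb := by simpa using M.mul_mem ha hb
  zero_mem' := by simp
  neg_mem' ha := by simpa using M.inv_mem ha

variable {M : Subgroup (Multiplicative V ⋊[semidirectAction G V] G)}

@[simp]
lemma mem_vectorPart {v : V} : v ∈ vectorPart M ↔ inl (ofAdd v) ∈ M := Iff.rfl

lemma smul_sub_mem_vectorPart (hM : M.Normal) {x : Multiplicative V ⋊[semidirectAction G V] G}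
    (hx : x ∈ M) (u : V) : x.right • u - u ∈ vectorPart M := by
  rw [mem_vectorPart, ← commutatorElement_inl]
  exact Subgroup.commutator_le.mp (Subgroup.commutator_le_left M ⊤) x hx _ trivial

lemma smul_mem_vectorPart (hM : M.Normal) (g : G) {w : V} (hw : w ∈ vectorPart M) :
    g • w ∈ vectorPart M := by
  have := hM.conj_mem _ hw (inr g)
  rwa [← map_inv, ← inl_aut] at this

lemma nsmul_toAdd_left_mem_vectorPart (hM : M.Normal)
    {x : Multiplicative V ⋊[semidirectAction G V] G} (hx : x ∈ M) {k : ℕ} (hk : x.right ^ k = 1) :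
    k • toAdd x.left ∈ vectorPart M := by
  have hpow : ∑ i ∈ Finset.range k, x.right ^ i • toAdd x.left ∈ vectorPart M := by
    rw [← toAdd_left_pow, mem_vectorPart, ofAdd_toAdd]
    convert pow_mem hx k
    ext
    · rfl
    · rw [right_inl, right_pow, hk]
  have hdiff : ∑ i ∈ Finset.range k, (x.right ^ i • toAdd x.left - toAdd x.left) ∈ vectorPart M :=
    sum_mem fun i _ ↦ by simpa only [right_pow] using smul_sub_mem_vectorPart hM (pow_mem hx i) _
  simpa [Finset.sum_sub_distrib] using sub_mem hpow hdiff

lemma toAdd_left_mem_vectorPart {p : ℕ} [Fact p.Prime] [Module (ZMod p) V] [Fintype G]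
    (hp : ¬ p ∣ Fintype.card G) (hM : M.Normal) {x : Multiplicative V ⋊[semidirectAction G V] G}
    (hx : x ∈ M) : toAdd x.left ∈ vectorPart M :=
  (vectorPart M).mem_of_nsmul_mem_of_not_dvd hp
    (nsmul_toAdd_left_mem_vectorPart hM hx pow_card_eq_one)

lemma mem_iff_of_forall_toAdd_left_mem (hleft : ∀ x ∈ M, toAdd x.left ∈ vectorPart M)
    (x : Multiplicative V ⋊[semidirectAction G V] G) :
    x ∈ M ↔ toAdd x.left ∈ vectorPart M ∧ x.right ∈ M.map rightHom := by
  refine ⟨fun hx ↦ ⟨hleft x hx, x, hx, rfl⟩, ?_⟩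
  rintro ⟨hxl, y, hy, hyx⟩
  have hx : x = inl (ofAdd (toAdd x.left - toAdd y.left)) * y := by
    ext
    · apply toAdd.injective
      simp only [toAdd_left_mul, left_inl, right_inl, toAdd_ofAdd, one_smul, sub_add_cancel]
    · rw [mul_right, right_inl, one_mul]
      exact hyx.symm
  rw [hx]
  exact M.mul_mem (sub_mem hxl (hleft y hy)) hy

lemma normal_of_forall_mem_iff {N : Subgroup G} (hN : N.Normal) {W : AddSubgroup V}
    (hWG : ∀ g : G, ∀ w ∈ W, g • w ∈ W) (hNW : ∀ n ∈ N, ∀ v : V, n • v - v ∈ W)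
    (hM : ∀ x, x ∈ M ↔ toAdd x.left ∈ W ∧ x.right ∈ N) : M.Normal := by
  refine ⟨fun x hx g ↦ ?_⟩
  rw [hM] at hx ⊢
  refine ⟨?_, hN.conj_mem _ hx.2 _⟩
  rw [toAdd_left_conj]
  exact sub_mem (hWG _ _ hx.1) (hNW _ (hN.conj_mem _ hx.2 _) _)

end

theorem statement0_general (p : ℕ) [Fact p.Prime] (G : Type*) [Group G] [Fintype G]
    (hp : ¬ p ∣ Fintype.card G)
    (V : Type*) [AddCommGroup V] [Module (ZMod p) V] [DistribMulAction G V]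
    (M : Subgroup (Multiplicative V ⋊[semidirectAction G V] G)) :
    M.Normal ↔
      ∃ N : Subgroup G, N.Normal ∧
        ∃ W : Submodule (ZMod p) V,
          (∀ g : G, ∀ w ∈ W, g • w ∈ W) ∧
          (∀ n ∈ N, ∀ v : V, n • v - v ∈ W) ∧
          (∀ h : Multiplicative V ⋊[semidirectAction G V] G,
            h ∈ M ↔ (Multiplicative.toAdd h.left ∈ W ∧ h.right ∈ N)) := by
  constructor
  · intro hM
    refine ⟨M.map rightHom, hM.map _ rightHom_surjective,
      AddSubgroup.toZModSubmodule p (vectorPart M), fun g _ ↦ smul_mem_vectorPart hM g, ?_,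
      mem_iff_of_forall_toAdd_left_mem fun _ ↦ toAdd_left_mem_vectorPart hp hM⟩
    rintro _ ⟨x, hx, rfl⟩ v
    exact smul_sub_mem_vectorPart hM hx v
  · rintro ⟨N, hN, W, hWG, hNW, hmem⟩
    exact normal_of_forall_mem_iff hN (W := W.toAddSubgroup) hWG hNW hmem

/-- Let `G` be a finite group, `p` a prime not dividing `|G|`, `V` an
`𝔽_p[G]`-module and `H = V ⋊ G`.  A subgroup `M` of `H` is normal if and only if it is of the
form `W ⋊ N` where `N ⊴ G`, `W ⊆ V` is an `𝔽_p[G]`-submodule, and `N` acts trivially on `V/W`. -/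
theorem statement0 (p : ℕ) [Fact p.Prime] (G : Type*) [Group G] [Fintype G]
    (hp : ¬ p ∣ Fintype.card G)
    (V : Type*) [AddCommGroup V] [Module (ZMod p) V] [DistribMulAction G V]
    [SMulCommClass G (ZMod p) V]
    (M : Subgroup (Multiplicative V ⋊[semidirectAction G V] G)) :
    M.Normal ↔
      ∃ N : Subgroup G, N.Normal ∧
        ∃ W : Submodule (ZMod p) V,
          (∀ g : G, ∀ w ∈ W, g • w ∈ W) ∧
          (∀ n ∈ N, ∀ v : V, n • v - v ∈ W) ∧
          (∀ h : Multiplicative V ⋊[semidirectAction G V] G,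
            h ∈ M ↔ (Multiplicative.toAdd h.left ∈ W ∧ h.right ∈ N)) :=
  statement0_general p G hp V M
end

section
/- Let G be a finite group, p a prime not dividing |G|, V an F_p[G]-module, and H = V ⋊ G. If W ⋊ N is a normal subgroup of H (with N ⊴ G and W an F_p[G]-submodule on whose quotient N acts trivially), then dim_{F_p} W ≥ dim_{F_p} V − dim_{F_p} V^N, where V^N denotes the subspace of N-fixed vectors. -/
/-- The submodule of `N`-fixed vectors of `V`. -/
def fixedSubmodule (p : ℕ) [Fact p.Prime] {G V : Type*} [Group G] [AddCommGroup V]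
    [Module (ZMod p) V] [DistribMulAction G V] [SMulCommClass G (ZMod p) V]
    (N : Subgroup G) : Submodule (ZMod p) V where
  carrier := {v : V | ∀ n ∈ N, n • v = v}
  add_mem' := by intro a b ha hb n hn; rw [smul_add, ha n hn, hb n hn]
  zero_mem' := by intro n hn; rw [smul_zero]
  smul_mem' := by intro c v hv n hn; rw [smul_comm, hv n hn]

namespace Representation

variable {k G V : Type*} [Field k] [Group G] [AddCommGroup V] [Module k V]
  (ρ : Representation k G V) [Fintype G] [Invertible (Fintype.card G : k)]

theorem averageMap_apply (v : V) : ρ.averageMap v = ⅟(Fintype.card G : k) • ∑ g : G, ρ g v := by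
  simp [averageMap, GroupAlgebra.average, map_sum]

theorem sub_averageMap_apply (v : V) :
    v - ρ.averageMap v = ⅟(Fintype.card G : k) • ∑ g : G, (v - ρ g v) := by
  rw [averageMap_apply, Finset.sum_sub_distrib, smul_sub, Finset.sum_const, Finset.card_univ,
    ← Nat.cast_smul_eq_nsmul k, smul_smul, invOf_mul_self, one_smul]

theorem ker_averageMap_le {W : Submodule k V} (hW : ∀ g v, ρ g v - v ∈ W) :
    LinearMap.ker ρ.averageMap ≤ W := by
  intro v hv
  have hv' : v = ⅟(Fintype.card G : k) • ∑ g : G, (v - ρ g v) := by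
    rw [← sub_averageMap_apply, LinearMap.mem_ker.mp hv, sub_zero]
  rw [hv']
  exact W.smul_mem _ (W.sum_mem fun g _ => sub_mem_comm_iff.mp (hW g v))

theorem finrank_sub_finrank_invariants_le [FiniteDimensional k V] {W : Submodule k V}
    (hW : ∀ g v, ρ g v - v ∈ W) :
    Module.finrank k V - Module.finrank k ρ.invariants ≤ Module.finrank k W := by
  have hsum := Submodule.finrank_add_eq_of_isCompl ρ.isProj_averageMap.isCompl
  have hker := Submodule.finrank_mono (ρ.ker_averageMap_le hW)
  omega

end Representation

theorem invariants_toModuleEnd_comp_subtype (p : ℕ) [Fact p.Prime] {G V : Type*} [Group G]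
    [AddCommGroup V] [Module (ZMod p) V] [DistribMulAction G V] [SMulCommClass G (ZMod p) V]
    (N : Subgroup G) :
    Representation.invariants ((DistribMulAction.toModuleEnd (ZMod p) V).comp N.subtype) =
      fixedSubmodule p N := by
  ext v
  simp [fixedSubmodule]

theorem statement1_general (p : ℕ) [Fact p.Prime] (G : Type*) [Group G] [Fintype G]
    (hp : ¬ p ∣ Fintype.card G)
    (V : Type*) [AddCommGroup V] [Module (ZMod p) V] [DistribMulAction G V]
    [SMulCommClass G (ZMod p) V] [FiniteDimensional (ZMod p) V]
    (N : Subgroup G)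
    (W : Submodule (ZMod p) V)
    (htriv : ∀ n ∈ N, ∀ v : V, n • v - v ∈ W) :
    Module.finrank (ZMod p) V - Module.finrank (ZMod p) (fixedSubmodule p (V := V) N) ≤
      Module.finrank (ZMod p) W := by
  classical
  have hpN : ((Fintype.card N : ℕ) : ZMod p) ≠ 0 := by
    rw [Ne, ZMod.natCast_eq_zero_iff]
    refine fun h => hp (h.trans ?_)
    simpa [Nat.card_eq_fintype_card] using N.card_subgroup_dvd_card
  have := invertibleOfNonzero hpN
  rw [← invariants_toModuleEnd_comp_subtype]
  exact Representation.finrank_sub_finrank_invariants_le _ fun n v => htriv n n.2 v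

/-- If `W ⋊ N` is a normal subgroup of `H = V ⋊ G` (with `N ⊴ G`, `W` an
`𝔽_p[G]`-submodule on whose quotient `N` acts trivially), then
`dim W ≥ dim V − dim V^N`. -/
theorem statement1 (p : ℕ) [Fact p.Prime] (G : Type*) [Group G] [Fintype G]
    (hp : ¬ p ∣ Fintype.card G)
    (V : Type*) [AddCommGroup V] [Module (ZMod p) V] [DistribMulAction G V]
    [SMulCommClass G (ZMod p) V] [FiniteDimensional (ZMod p) V]
    (N : Subgroup G) (hN : N.Normal)
    (W : Submodule (ZMod p) V)
    (hWstable : ∀ g : G, ∀ w ∈ W, g • w ∈ W)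
    (htriv : ∀ n ∈ N, ∀ v : V, n • v - v ∈ W)
    (M : Subgroup (Multiplicative V ⋊[semidirectAction G V] G))
    (hM : M.Normal)
    (hMchar : ∀ h : Multiplicative V ⋊[semidirectAction G V] G,
      h ∈ M ↔ (Multiplicative.toAdd h.left ∈ W ∧ h.right ∈ N)) :
    Module.finrank (ZMod p) V - Module.finrank (ZMod p) (fixedSubmodule p (V := V) N) ≤
      Module.finrank (ZMod p) W :=
  statement1_general p G hp V N W htriv
end

section
/- Let Π = (p_i) be a sequence of primes tending to infinity and let Γ be a Π-graded torsion group. Then for every finite-index normal subgroup N of Γ, there exists k such that Γ^{Π(k)} ⊆ N; i.e., the residual chain (Γ^{Π(n)}) is cofinal among finite-index normal subgroups. -/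
open scoped commutatorElement

/-- `D_p(K) = K^p [K,K]`: the subgroup generated by `p`-th powers and commutators of
elements of `K`, as a subgroup of the ambient group. -/
def Dverbal {Γ : Type*} [Group Γ] (p : ℕ) (K : Subgroup Γ) : Subgroup Γ :=
  Subgroup.closure ({x : Γ | ∃ k ∈ K, x = k ^ p} ∪
    {x : Γ | ∃ a ∈ K, ∃ b ∈ K, x = ⁅a, b⁆})

/-- The series `Γ^{Π(0)} = Γ`, `Γ^{Π(n)} = D_{p_n}(Γ^{Π(n-1)})`. -/
def piSeries {Γ : Type*} [Group Γ] (P : ℕ → ℕ) : ℕ → Subgroup Γ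
  | 0 => ⊤
  | n + 1 => Dverbal (P (n + 1)) (piSeries P n)

/-!
An element of order coprime to `p` is a `p`-th power inside its own cyclic group, so it
survives the step `K ↦ D_p(K)`. Hence an element of prime order `q` in `Γ^{Π(k)}` lies in
every term of the series unless `q = p_n` for some `n > k`; as the series intersects
trivially, every prime divisor of the order of an element of `Γ^{Π(k)}` is some `p_n`
with `n > k`. Given `N` of finite index, choose `k` with `p_n` larger than the index `m` of
the normal core of `N` for all `n ≥ k`: elements of `Γ^{Π(k)}` then have order coprime to
`m`, and such an element is a power of its `m`-th power, which lies in the core.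
-/

section Series

variable {Γ : Type*} [Group Γ]

lemma Dverbal_le (p : ℕ) (K : Subgroup Γ) : Dverbal p K ≤ K := by
  refine (Subgroup.closure_le K).mpr ?_
  rintro x (⟨k, hk, rfl⟩ | ⟨a, ha, b, hb, rfl⟩)
  · exact K.pow_mem hk p
  · rw [commutatorElement_def]
    exact K.mul_mem (K.mul_mem (K.mul_mem ha hb) (K.inv_mem ha)) (K.inv_mem hb)

lemma mem_Dverbal_of_coprime {p : ℕ} {K : Subgroup Γ} {h : Γ} (hh : h ∈ K)
    (hcop : p.Coprime (orderOf h)) : h ∈ Dverbal p K := by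
  obtain ⟨a, ha⟩ := exists_pow_eq_self_of_coprime hcop
  refine Subgroup.subset_closure (Or.inl ⟨h ^ a, K.pow_mem hh a, ?_⟩)
  rw [← pow_mul, mul_comm, pow_mul, ha]

lemma piSeries_antitone (P : ℕ → ℕ) : Antitone (piSeries (Γ := Γ) P) :=
  antitone_nat_of_succ_le fun _ ↦ Dverbal_le _ _

lemma mem_piSeries_of_coprime {P : ℕ → ℕ} {k : ℕ} {h : Γ} (hh : h ∈ piSeries P k)
    (hcop : ∀ n > k, (P n).Coprime (orderOf h)) (n : ℕ) : h ∈ piSeries P n := by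
  induction n with
  | zero => exact Subgroup.mem_top h
  | succ n ih =>
    by_cases hnk : n + 1 ≤ k
    · exact piSeries_antitone P hnk hh
    · exact mem_Dverbal_of_coprime ih (hcop (n + 1) (by omega))

lemma exists_eq_of_prime_dvd_orderOf_of_mem_piSeries {P : ℕ → ℕ} (hP : ∀ i, (P i).Prime)
    (hres : ⨅ n, piSeries (Γ := Γ) P n = ⊥) {k : ℕ} {g : Γ} (hg : g ∈ piSeries P k)
    (hgfin : IsOfFinOrder g) {q : ℕ} (hq : q.Prime) (hqg : q ∣ orderOf g) :
    ∃ n > k, P n = q := by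
  by_contra! hne
  set h := g ^ (orderOf g / q)
  have horder : orderOf h = q := orderOf_pow_orderOf_div hgfin.orderOf_pos.ne' hqg
  have hcop : ∀ n > k, (P n).Coprime (orderOf h) := fun n hn ↦
    horder ▸ (Nat.coprime_primes (hP n) hq).mpr (hne n hn)
  have hbot : h ∈ (⊥ : Subgroup Γ) := by
    rw [← hres, Subgroup.mem_iInf]
    exact mem_piSeries_of_coprime ((piSeries P k).pow_mem hg _) hcop
  rw [Subgroup.mem_bot] at hbot
  exact hq.one_lt.ne' (by rw [← horder, hbot, orderOf_one])

end Series

lemma Subgroup.mem_of_coprime_index {G : Type*} [Group G] (H : Subgroup G) [H.Normal] {g : G}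
    (hcop : (orderOf g).Coprime H.index) : g ∈ H := by
  obtain ⟨a, ha⟩ := exists_pow_eq_self_of_coprime hcop.symm
  exact ha ▸ H.pow_mem (H.pow_index_mem g) a

theorem statement4_general {Γ : Type*} [Group Γ] (P : ℕ → ℕ)
    (hP : ∀ i, (P i).Prime)
    (hPinf : Filter.Tendsto P Filter.atTop Filter.atTop)
    (htorsion : ∀ g : Γ, IsOfFinOrder g)
    (hres : ⨅ n, piSeries (Γ := Γ) P n = ⊥)
    (N : Subgroup Γ) (hNfin : N.FiniteIndex) :
    ∃ k, piSeries P k ≤ N := by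
  obtain ⟨k, hk⟩ := Filter.eventually_atTop.mp (hPinf.eventually_gt_atTop N.normalCore.index)
  refine ⟨k, fun g hg ↦ N.normalCore_le ?_⟩
  refine N.normalCore.mem_of_coprime_index (Nat.coprime_of_dvd fun q hq hqg hqm ↦ ?_)
  obtain ⟨n, hnk, rfl⟩ :=
    exists_eq_of_prime_dvd_orderOf_of_mem_piSeries hP hres hg (htorsion g) hq hqg
  have hindex_pos : 0 < N.normalCore.index := Nat.pos_of_ne_zero Subgroup.FiniteIndex.index_ne_zero
  exact (hk n hnk.le).not_ge (Nat.le_of_dvd hindex_pos hqm)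

/-- If `Π` is a sequence of primes tending to infinity and `Γ` is a
`Π`-graded torsion group, then the residual chain `(Γ^{Π(n)})` is cofinal: every
finite-index normal subgroup of `Γ` contains some `Γ^{Π(k)}`. -/
theorem statement4 {Γ : Type*} [Group Γ] (P : ℕ → ℕ)
    (hP : ∀ i, (P i).Prime)
    (hPinf : Filter.Tendsto P Filter.atTop Filter.atTop)
    (htorsion : ∀ g : Γ, IsOfFinOrder g)
    (hfin : ∀ n, (piSeries (Γ := Γ) P n).FiniteIndex)
    (hres : ⨅ n, piSeries (Γ := Γ) P n = ⊥)
    (N : Subgroup Γ) (hN : N.Normal) (hNfin : N.FiniteIndex) :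
    ∃ k, piSeries P k ≤ N :=
  statement4_general P hP hPinf htorsion hres N hNfin
end

section
/- Let p ≥ 2, c, d ≥ 1 and suppose a module V contains at most p^{(d+c)j} irreducible submodules of dimension j for each j ≥ 1, and every submodule of dimension at most r is a sum of irreducible submodules whose dimensions sum to at most r. Then the number of submodules of V of dimension at most r is at most p^{(d+c+1)r}. -/
/-!
Removing one irreducible summand of dimension `j` from a family of total dimension at most `ℓ`
leaves a family of total dimension at most `ℓ - j`, so the number `F ℓ` of such families obeys
`F ℓ ≤ 1 + ∑_{j=1}^{ℓ} p^{(d+c)j} F (ℓ - j)`. Inductively `F ℓ ≤ p^{(d+c+1)ℓ}`, the geometric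
series `1 + ∑_{i<ℓ} p^i ≤ p^ℓ` absorbing the extra factor. Every submodule of dimension at most
`r` is the sum of such a family, so there are at most `F r` of them.
-/

open Finset

lemma one_add_sum_pow_mul_pow_le {p : ℕ} (hp : 2 ≤ p) (m ℓ : ℕ) :
    1 + ∑ i ∈ range ℓ, p ^ (m * (ℓ - i)) * p ^ ((m + 1) * i) ≤ p ^ ((m + 1) * ℓ) := by
  have hterm : ∀ i ∈ range ℓ,
      p ^ (m * (ℓ - i)) * p ^ ((m + 1) * i) = p ^ (m * ℓ) * p ^ i := by
    intro i hi
    obtain ⟨t, rfl⟩ := Nat.exists_eq_add_of_le (mem_range.1 hi).le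
    rw [Nat.add_sub_cancel_left, ← pow_add, ← pow_add]
    ring_nf
  have hgeom : ∑ i ∈ range ℓ, p ^ i < p ^ ℓ := Nat.geomSum_lt hp fun i hi => mem_range.1 hi
  have hone : 1 ≤ p ^ (m * ℓ) := Nat.one_le_pow _ _ (by omega)
  calc 1 + ∑ i ∈ range ℓ, p ^ (m * (ℓ - i)) * p ^ ((m + 1) * i)
      = 1 + p ^ (m * ℓ) * ∑ i ∈ range ℓ, p ^ i := by rw [sum_congr rfl hterm, mul_sum]
    _ ≤ p ^ (m * ℓ) * (1 + ∑ i ∈ range ℓ, p ^ i) := by rw [mul_add, mul_one]; gcongr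
    _ ≤ p ^ (m * ℓ) * p ^ ℓ := by gcongr; omega
    _ = p ^ ((m + 1) * ℓ) := by rw [← pow_add]; ring_nf

section PowersetSumLE

variable {X : Type*} (S : Finset X) (dim : X → ℕ)

def powersetSumLE (ℓ : ℕ) : Finset (Finset X) :=
  S.powerset.filter fun s => ∑ x ∈ s, dim x ≤ ℓ

variable {S dim} in
lemma mem_powersetSumLE {ℓ : ℕ} {s : Finset X} :
    s ∈ powersetSumLE S dim ℓ ↔ s ⊆ S ∧ ∑ x ∈ s, dim x ≤ ℓ := by
  simp [powersetSumLE]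

lemma powersetSumLE_subset_insert_image [DecidableEq X] (hpos : ∀ x ∈ S, 1 ≤ dim x)
    (ℓ : ℕ) :
    powersetSumLE S dim ℓ ⊆ insert ∅ (((range ℓ).biUnion fun i =>
      S.filter (dim · = ℓ - i) ×ˢ powersetSumLE S dim i).image
        fun xt => insert xt.1 xt.2) := by
  intro s hs
  rw [mem_powersetSumLE] at hs
  obtain rfl | ⟨x, hx⟩ := s.eq_empty_or_nonempty
  · exact mem_insert_self _ _
  refine mem_insert_of_mem (mem_image.2 ⟨(x, s.erase x), ?_, insert_erase hx⟩)
  have hsum := sum_erase_add s dim hx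
  have := hpos x (hs.1 hx)
  simp only [mem_biUnion, mem_range, mem_product, mem_filter, mem_powersetSumLE]
  exact ⟨ℓ - dim x, by omega, ⟨hs.1 hx, by omega⟩,
    (erase_subset x s).trans hs.1, by omega⟩

theorem card_powersetSumLE_le [DecidableEq X] {p m : ℕ} (hp : 2 ≤ p)
    (hpos : ∀ x ∈ S, 1 ≤ dim x) {ℓ : ℕ}
    (hcount : ∀ j, 1 ≤ j → j ≤ ℓ → #(S.filter (dim · = j)) ≤ p ^ (m * j)) :
    #(powersetSumLE S dim ℓ) ≤ p ^ ((m + 1) * ℓ) := by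
  induction ℓ using Nat.strong_induction_on with
  | _ ℓ ih =>
  calc #(powersetSumLE S dim ℓ)
      ≤ 1 + ∑ i ∈ range ℓ, #(S.filter (dim · = ℓ - i)) * #(powersetSumLE S dim i) := by
        refine (card_le_card (powersetSumLE_subset_insert_image S dim hpos ℓ)).trans ?_
        refine (card_insert_le _ _).trans ?_
        rw [add_comm]
        gcongr
        exact card_image_le.trans <|
          card_biUnion_le.trans (sum_le_sum fun i _ => (card_product _ _).le)
    _ ≤ 1 + ∑ i ∈ range ℓ, p ^ (m * (ℓ - i)) * p ^ ((m + 1) * i) := by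
        gcongr with i hi <;> rw [mem_range] at hi
        · exact hcount _ (by omega) (by omega)
        · exact ih i hi fun j hj hji => hcount j hj (by omega)
    _ ≤ p ^ ((m + 1) * ℓ) := one_add_sum_pow_mul_pow_le hp m ℓ

end PowersetSumLE

theorem statement13_general (p c d r : ℕ) (hp : 2 ≤ p)
    (k : Type*) [Field k] (A : Type*) [Ring A] [Algebra k A]
    (V : Type*) [AddCommGroup V] [Module A V] [Module k V] [IsScalarTower k A V]
    (hsimple_dim : ∀ U : Submodule A V, IsSimpleModule A U →
      1 ≤ Module.finrank k (U.restrictScalars k))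
    (hcount : ∀ j : ℕ, 1 ≤ j →
      {U : Submodule A V | IsSimpleModule A U ∧
        Module.finrank k (U.restrictScalars k) = j}.ncard ≤ p ^ ((d + c) * j))
    (hsum : ∀ W : Submodule A V, Module.finrank k (W.restrictScalars k) ≤ r →
      ∃ s : Finset (Submodule A V), (∀ U ∈ s, IsSimpleModule A U) ∧
        W = s.sup id ∧ ∑ U ∈ s, Module.finrank k (U.restrictScalars k) ≤ r) :
    {W : Submodule A V | Module.finrank k (W.restrictScalars k) ≤ r}.ncard ≤
      p ^ ((d + c + 1) * r) := by
  classical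
  set dim : Submodule A V → ℕ := fun U => Module.finrank k (U.restrictScalars k)
  by_cases hfin : {W | dim W ≤ r}.Finite
  swap
  · rw [Set.Infinite.ncard hfin]
    exact Nat.zero_le _
  set S := hfin.toFinset.filter fun U : Submodule A V => IsSimpleModule A U
  have hcountS : ∀ j, 1 ≤ j → j ≤ r → #(S.filter (dim · = j)) ≤ p ^ ((d + c) * j) := by
    intro j hj hjr
    convert hcount j hj using 1
    rw [← Set.ncard_coe_finset]
    congr 1
    ext U
    simp only [S, coe_filter, mem_filter, Set.Finite.mem_toFinset, Set.mem_ofPred_eq]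
    exact ⟨fun h => ⟨h.1.2, h.2⟩, fun h => ⟨⟨h.2.trans_le hjr, h.1⟩, h.2⟩⟩
  have hcover : {W | dim W ≤ r} ⊆ ((powersetSumLE S dim r).image (·.sup id) : Set _) := by
    intro W hW
    obtain ⟨s, hsimple, rfl, hs⟩ := hsum W hW
    refine mem_image.2 ⟨s, mem_powersetSumLE.2 ⟨fun U hU => ?_, hs⟩, rfl⟩
    simp only [S, mem_filter, Set.Finite.mem_toFinset, Set.mem_ofPred_eq]
    exact ⟨(single_le_sum (fun _ _ => Nat.zero_le _) hU).trans hs, hsimple U hU⟩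
  calc {W | dim W ≤ r}.ncard
      ≤ #((powersetSumLE S dim r).image (·.sup id)) := by
        rw [← Set.ncard_coe_finset]
        exact Set.ncard_le_ncard hcover
    _ ≤ #(powersetSumLE S dim r) := card_image_le
    _ ≤ p ^ ((d + c + 1) * r) :=
        card_powersetSumLE_le S dim hp (fun U hU => hsimple_dim U (mem_filter.1 hU).2) hcountS

/-- Let `p ≥ 2`, `c, d ≥ 1` and suppose a module `V` contains at most
`p^{(d+c)j}` irreducible submodules of dimension `j` for each `j ≥ 1`, every irreducible
submodule has dimension at least `1`, and every submodule of dimension at most `r` is a sum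
of irreducible submodules whose dimensions sum to at most `r`.  Then the number of
submodules of `V` of dimension at most `r` is at most `p^{(d+c+1)r}`. -/
theorem statement13 (p c d r : ℕ) (hp : 2 ≤ p) (hc : 1 ≤ c) (hd : 1 ≤ d)
    (k : Type*) [Field k] (A : Type*) [Ring A] [Algebra k A]
    (V : Type*) [AddCommGroup V] [Module A V] [Module k V] [IsScalarTower k A V]
    (hsimple_dim : ∀ U : Submodule A V, IsSimpleModule A U →
      1 ≤ Module.finrank k (U.restrictScalars k))
    (hcount : ∀ j : ℕ, 1 ≤ j →
      {U : Submodule A V | IsSimpleModule A U ∧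
        Module.finrank k (U.restrictScalars k) = j}.ncard ≤ p ^ ((d + c) * j))
    (hsum : ∀ W : Submodule A V, Module.finrank k (W.restrictScalars k) ≤ r →
      ∃ s : Finset (Submodule A V), (∀ U ∈ s, IsSimpleModule A U) ∧
        W = s.sup id ∧ ∑ U ∈ s, Module.finrank k (U.restrictScalars k) ≤ r) :
    {W : Submodule A V | Module.finrank k (W.restrictScalars k) ≤ r}.ncard ≤
      p ^ ((d + c + 1) * r) :=
  statement13_general p c d r hp k A V hsimple_dim hcount hsum
end

section
/- Let G be a finite group with generating set T of size d, p a prime not dividing |G|, w_1,…,w_r ∈ F (the free group on d generators with presentation π: F → G), and H_1,…,H_s subgroups of G. If δ := 1 − Σ_i 1/(ord(π(w_i))(d−1)) − Σ_j |G|/(|H_j|·|N_G(H_j)|) > 0, then the quotient V of the relation module V_{T,p} ≅ F_p[G]^{d−1} ⊕ 1 by the submodules U_i = ⟨w_i^{ord(π(w_i))}⟩_{F_p[G]} and W_j = ⟨V_{T,p}^{H_j}⟩_{F_p[G]} satisfies dim_{F_p} V ≥ (d−1)|G|δ. -/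
def fixedPoints {k G V : Type*} [CommSemiring k] [Group G] [AddCommMonoid V] [Module k V]
    (ρ : Representation k G V) (H : Subgroup G) : Submodule k V where
  carrier := {v : V | ∀ h ∈ H, ρ h v = v}
  add_mem' := by intro a b ha hb h hh; rw [map_add, ha h hh, hb h hh]
  zero_mem' := by intro h hh; rw [map_zero]
  smul_mem' := by intro c v hv h hh; rw [map_smul, hv h hh]

/-!
The relation module `V ≅ k[G]^m ⊕ k` has dimension `m|G| + 1`. The submodule generated by a
`g`-fixed vector `u` is spanned by the translates `ρ(x) u`, one per coset of `⟨g⟩`, so its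
dimension is at most `[G : ⟨g⟩] = |G| / ord g`. The submodule generated by `V^H` is the sum of
the translates `ρ(x) V^H`, one per coset of `N_G(H)`; each has dimension at most `m[G : H] + 1`,
since an `H`-invariant element of `k[G]` is determined by its coefficients at representatives
of the cosets of `H`, and all of them contain the `G`-fixed line `0 ⊕ k`, which is therefore
counted only once. Subtracting these bounds from `m|G| + 1` and writing `[G : K] = |G| / |K|`
gives the estimate.
-/

open Module Submodule

section FinrankSup

variable {K V ι : Type*} [Field K] [AddCommGroup V] [Module K V] [FiniteDimensional K V]
  [Fintype ι]

theorem Submodule.finrank_iSup_le_sum (S : ι → Submodule K V) :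
    finrank K ↥(⨆ i, S i) ≤ ∑ i, finrank K (S i) := by
  classical
  rw [← Finset.sup_univ_eq_iSup]
  induction (Finset.univ : Finset ι) using Finset.induction_on with
  | empty => simp
  | insert a t ha ih =>
    rw [Finset.sup_insert, Finset.sum_insert ha]
    exact (finrank_add_le_finrank_add_finrank _ _).trans (by omega)

theorem Submodule.finrank_iSup_le_one_add_sum_of_mem {v : V} (hv : v ≠ 0)
    {S : ι → Submodule K V} (hvS : ∀ i, v ∈ S i) {b : ι → ℕ}
    (hb : ∀ i, finrank K (S i) ≤ b i + 1) :
    finrank K ↥(⨆ i, S i) ≤ 1 + ∑ i, b i := by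
  classical
  suffices ∀ t : Finset ι, finrank K ↥((K ∙ v) ⊔ t.sup S) ≤ 1 + ∑ i ∈ t, b i from
    (finrank_mono (by rw [← Finset.sup_univ_eq_iSup]; exact le_sup_right)).trans (this _)
  intro t
  induction t using Finset.induction_on with
  | empty =>
    rw [Finset.sup_empty, sup_bot_eq, finrank_span_singleton hv, Finset.sum_empty, add_zero]
  | insert a t ha ih =>
    have hinf : 1 ≤ finrank K ↥(S a ⊓ ((K ∙ v) ⊔ t.sup S)) := by
      rw [← finrank_span_singleton (K := K) hv]
      exact finrank_mono <| (span_singleton_le_iff_mem _ _).2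
        ⟨hvS a, mem_sup_left (mem_span_singleton_self v)⟩
    have hsum := finrank_sup_add_finrank_inf_eq (S a) ((K ∙ v) ⊔ t.sup S)
    rw [Finset.sup_insert, sup_left_comm, Finset.sum_insert ha]
    have := hb a
    omega

end FinrankSup

section Representation

variable {k G V : Type*} [CommSemiring k] [Group G] [AddCommMonoid V] [Module k V]
  (ρ : Representation k G V)

theorem map_fixedPoints_le_of_mem_normalizer {K : Subgroup G} {x : G}
    (hx : x ∈ Subgroup.normalizer (K : Set G)) :
    (fixedPoints ρ K).map (ρ x) ≤ fixedPoints ρ K := by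
  rintro _ ⟨v, hv, rfl⟩ h hh
  have hconj : x⁻¹ * h * x ∈ K := (Subgroup.mem_normalizer_iff''.mp hx h).mp hh
  calc ρ h (ρ x v) = ρ x (ρ (x⁻¹ * h * x) v) := by
        simp only [← Module.End.mul_apply, ← map_mul, mul_assoc, mul_inv_cancel_left]
    _ = ρ x v := by rw [hv _ hconj]

theorem mem_fixedPoints_zpowers [Finite G] {g : G} {u : V} (hu : ρ g u = u) :
    u ∈ fixedPoints ρ (Subgroup.zpowers g) := by
  intro x hx
  obtain ⟨n, rfl⟩ := mem_powers_iff_mem_zpowers.2 hx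
  rw [map_pow, Module.End.pow_apply]
  exact Function.iterate_fixed hu n

theorem map_span_singleton_le_of_mem_fixedPoints {K : Subgroup G} {u : V}
    (hu : u ∈ fixedPoints ρ K) {x : G} (hx : x ∈ K) : (k ∙ u).map (ρ x) ≤ k ∙ u := by
  rw [map_span, Set.image_singleton, span_singleton_le_iff_mem, hu x hx]
  exact mem_span_singleton_self u

theorem iSup_map_eq_iSup_map_out {K : Subgroup G} {S : Submodule k V}
    (hS : ∀ x ∈ K, S.map (ρ x) ≤ S) :
    ⨆ x : G, S.map (ρ x) = ⨆ q : G ⧸ K, S.map (ρ q.out) := by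
  refine le_antisymm (iSup_le fun x => ?_) (iSup_le fun q => le_iSup (fun x => S.map (ρ x)) q.out)
  obtain ⟨h, hout⟩ := QuotientGroup.mk_out_eq_mul K x
  have hx : x = (x : G ⧸ K).out * (h : G)⁻¹ := by rw [hout, mul_inv_cancel_right]
  calc S.map (ρ x) = (S.map (ρ (h : G)⁻¹)).map (ρ (x : G ⧸ K).out) := by
        conv_lhs => rw [hx, map_mul, Module.End.mul_eq_comp, map_comp]
    _ ≤ S.map (ρ (x : G ⧸ K).out) := map_mono (hS _ (inv_mem h.2))
    _ ≤ ⨆ q : G ⧸ K, S.map (ρ q.out) := le_iSup (fun q : G ⧸ K => S.map (ρ q.out)) _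

end Representation

section FiniteGroup

variable {k G V : Type*} [Field k] [Group G] [Finite G] [AddCommGroup V] [Module k V]
  [FiniteDimensional k V] (ρ : Representation k G V)

theorem finrank_iSup_map_le_index_mul {K : Subgroup G} {S : Submodule k V}
    (hS : ∀ x ∈ K, S.map (ρ x) ≤ S) :
    finrank k ↥(⨆ x : G, S.map (ρ x)) ≤ K.index * finrank k S := by
  have := Fintype.ofFinite (G ⧸ K)
  rw [iSup_map_eq_iSup_map_out ρ hS]
  calc _ ≤ ∑ q : G ⧸ K, finrank k ↥(S.map (ρ q.out)) := finrank_iSup_le_sum _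
    _ ≤ ∑ _q : G ⧸ K, finrank k S := Finset.sum_le_sum fun q _ => finrank_map_le _ _
    _ = K.index * finrank k S := by
      rw [Finset.sum_const, Finset.card_univ, smul_eq_mul, Subgroup.index_eq_card,
        Nat.card_eq_fintype_card]

theorem finrank_span_orbit_le_index {g : G} {u : V} (hu : ρ g u = u) :
    finrank k ↥(span k (Set.range fun h => ρ h u)) ≤ (Subgroup.zpowers g).index := by
  have horbit : span k (Set.range fun h => ρ h u) = ⨆ h : G, (k ∙ u).map (ρ h) := by
    simp_rw [span_range_eq_iSup, map_span, Set.image_singleton]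
  have hline : finrank k ↥(k ∙ u) ≤ 1 := (finrank_span_le_card {u}).trans (by simp)
  rw [horbit]
  refine (finrank_iSup_map_le_index_mul ρ fun x hx =>
    map_span_singleton_le_of_mem_fixedPoints ρ (mem_fixedPoints_zpowers ρ hu) hx).trans ?_
  simpa using Nat.mul_le_mul_left (Subgroup.zpowers g).index hline

end FiniteGroup

theorem MonoidAlgebra.coeff_eq_coeff_inv_out_of_forall_of_mul_eq {k G : Type*} [Semiring k]
    [Group G] {K : Subgroup G} {a : MonoidAlgebra k G}
    (ha : ∀ h ∈ K, MonoidAlgebra.of k G h * a = a) (x : G) :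
    a.coeff x = a.coeff (QuotientGroup.mk x⁻¹ : G ⧸ K).out⁻¹ := by
  obtain ⟨h, hout⟩ := QuotientGroup.mk_out_eq_mul K x⁻¹
  rw [hout, mul_inv_rev, inv_inv]
  conv_lhs => rw [← ha _ h.2]
  simp [MonoidAlgebra.of_apply, MonoidAlgebra.coeff_single_mul_apply]

theorem finrank_pi_monoidAlgebra_prod (k G : Type*) [Field k] [Fintype G] (m : ℕ) :
    finrank k ((Fin m → MonoidAlgebra k G) × k) = m * Fintype.card G + 1 := by
  have hG : finrank k (MonoidAlgebra k G) = Fintype.card G :=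
    finrank_eq_card_basis (MonoidAlgebra.basis G k)
  simp [Module.finrank_pi_fintype, hG]

theorem Subgroup.index_cast_eq_div {R G : Type*} [DivisionRing R] [CharZero R] [Group G]
    [Finite G] (K : Subgroup G) : (K.index : R) = Nat.card G / Nat.card K := by
  rw [eq_div_iff (Nat.cast_ne_zero.2 Nat.card_pos.ne'), ← Nat.cast_mul, K.index_mul_card]

section RelationModule

variable {k G V : Type*} [Field k] [Group G] [AddCommGroup V] [Module k V]
  {ρ : Representation k G V} {m : ℕ}

theorem exists_ne_zero_forall_eq_of_linearEquiv (e : V ≃ₗ[k] (Fin m → MonoidAlgebra k G) × k)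
    (he : ∀ g v, e (ρ g v) = (fun i => MonoidAlgebra.of k G g * (e v).1 i, (e v).2)) :
    ∃ v : V, v ≠ 0 ∧ ∀ g, ρ g v = v := by
  refine ⟨e.symm (0, 1), by simp, fun g => e.injective ?_⟩
  rw [he]
  simp [Pi.zero_def]

theorem finrank_fixedPoints_le [Finite G] (e : V ≃ₗ[k] (Fin m → MonoidAlgebra k G) × k)
    (he : ∀ g v, e (ρ g v) = (fun i => MonoidAlgebra.of k G g * (e v).1 i, (e v).2))
    (K : Subgroup G) :
    finrank k (fixedPoints ρ K) ≤ m * K.index + 1 := by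
  have := Fintype.ofFinite (G ⧸ K)
  let coeffs : MonoidAlgebra k G →ₗ[k] G ⧸ K → k :=
    LinearMap.pi fun q => (MonoidAlgebra.basis G k).coord q.out⁻¹
  let Φ : V →ₗ[k] (Fin m → G ⧸ K → k) × k :=
    (LinearMap.pi fun i => coeffs ∘ₗ LinearMap.proj i).prodMap LinearMap.id ∘ₗ e.toLinearMap
  have hinj : Function.Injective (Φ ∘ₗ (fixedPoints ρ K).subtype) := by
    rw [← LinearMap.ker_eq_bot, LinearMap.ker_eq_bot']
    rintro ⟨v, hv⟩ hΦ
    replace hΦ : Φ v = 0 := hΦ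
    have hinv : ∀ i, ∀ h ∈ K, MonoidAlgebra.of k G h * (e v).1 i = (e v).1 i :=
      fun i h hh => by simpa [hv h hh] using (congrArg (fun w => w.1 i) (he h v)).symm
    have hcomp : ∀ i, (e v).1 i = 0 := fun i =>
      MonoidAlgebra.coeff_injective <| Finsupp.ext fun x => by
        rw [MonoidAlgebra.coeff_eq_coeff_inv_out_of_forall_of_mul_eq (hinv i) x]
        exact congrFun (congrFun (congrArg Prod.fst hΦ) i) _
    have : e v = 0 := Prod.ext (funext hcomp) (congrArg Prod.snd hΦ :)
    simpa using this
  calc finrank k (fixedPoints ρ K) ≤ finrank k ((Fin m → G ⧸ K → k) × k) :=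
        LinearMap.finrank_le_finrank_of_injective hinj
    _ = m * K.index + 1 := by
      simp [Subgroup.index_eq_card, Nat.card_eq_fintype_card, Module.finrank_pi_fintype]

theorem finrank_iSup_span_orbit_fixedPoints_le [Finite G] [FiniteDimensional k V]
    (e : V ≃ₗ[k] (Fin m → MonoidAlgebra k G) × k)
    (he : ∀ g v, e (ρ g v) = (fun i => MonoidAlgebra.of k G g * (e v).1 i, (e v).2))
    {κ : Type*} [Fintype κ] (H : κ → Subgroup G) :
    finrank k ↥(⨆ j, span k (⋃ x : G, ρ x '' (fixedPoints ρ (H j) : Set V))) ≤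
      1 + ∑ j, (Subgroup.normalizer (H j : Set G)).index * (m * (H j).index) := by
  obtain ⟨v₀, hv₀, hfix⟩ := exists_ne_zero_forall_eq_of_linearEquiv e he
  have := fun j => Fintype.ofFinite (G ⧸ Subgroup.normalizer (H j : Set G))
  have horbit : ∀ j, span k (⋃ x : G, ρ x '' (fixedPoints ρ (H j) : Set V)) =
      ⨆ q : G ⧸ Subgroup.normalizer (H j : Set G), (fixedPoints ρ (H j)).map (ρ q.out) :=
    fun j => by
      simp_rw [span_iUnion, ← map_coe, span_eq]
      exact iSup_map_eq_iSup_map_out ρ fun x hx => map_fixedPoints_le_of_mem_normalizer ρ hx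
  rw [iSup_congr horbit,
    ← iSup_sigma (f := fun jq : Σ j, G ⧸ Subgroup.normalizer (H j : Set G) =>
      (fixedPoints ρ (H jq.1)).map (ρ jq.2.out))]
  refine (finrank_iSup_le_one_add_sum_of_mem hv₀ (fun jq => ?_)
    fun jq => (finrank_map_le _ _).trans (finrank_fixedPoints_le e he _)).trans ?_
  · exact mem_map.2 ⟨v₀, fun h _ => hfix h, hfix _⟩
  · simp [Fintype.sum_sigma, Subgroup.index_eq_card, Nat.card_eq_fintype_card]

theorem le_finrank_quotient_add_sum_index [Fintype G] [FiniteDimensional k V]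
    (e : V ≃ₗ[k] (Fin m → MonoidAlgebra k G) × k)
    (he : ∀ g v, e (ρ g v) = (fun i => MonoidAlgebra.of k G g * (e v).1 i, (e v).2))
    {ι κ : Type*} [Fintype ι] [Fintype κ] {g : ι → G} {u : ι → V}
    (hu : ∀ i, ρ (g i) (u i) = u i) (H : κ → Subgroup G) :
    m * Fintype.card G ≤
      finrank k (V ⧸ ((⨆ i, span k (Set.range fun h => ρ h (u i))) ⊔
        ⨆ j, span k (⋃ x : G, ρ x '' (fixedPoints ρ (H j) : Set V)))) +
      ∑ i, (Subgroup.zpowers (g i)).index +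
      ∑ j, (Subgroup.normalizer (H j : Set G)).index * (m * (H j).index) := by
  have hV := e.finrank_eq.trans (finrank_pi_monoidAlgebra_prod k G m)
  have hU := (finrank_iSup_le_sum _).trans <| Finset.sum_le_sum fun i _ =>
    finrank_span_orbit_le_index ρ (hu i)
  have hW := finrank_iSup_span_orbit_fixedPoints_le e he H
  set A := ⨆ i, span k (Set.range fun h => ρ h (u i))
  set B := ⨆ j, span k (⋃ x : G, ρ x '' (fixedPoints ρ (H j) : Set V))
  have hsup := finrank_add_le_finrank_add_finrank A B
  have hquot := finrank_quotient_add_finrank (A ⊔ B)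
  omega

end RelationModule

theorem statement18_general (p d : ℕ) [Fact p.Prime] (G : Type) [Group G] [Fintype G]
    (hd : 2 ≤ d)
    (V : Type) [AddCommGroup V] [Module (ZMod p) V] [FiniteDimensional (ZMod p) V]
    (ρ : Representation (ZMod p) G V)
    (e : V ≃ₗ[ZMod p] (Fin (d - 1) → MonoidAlgebra (ZMod p) G) × (ZMod p))
    (he : ∀ (g : G) (v : V),
      e (ρ g v) = (fun i => MonoidAlgebra.of (ZMod p) G g * (e v).1 i, (e v).2))
    (r s : ℕ) (g : Fin r → G) (u : Fin r → V)
    (hu : ∀ i, ρ (g i) (u i) = u i)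
    (H : Fin s → Subgroup G)
    (U : Fin r → Submodule (ZMod p) V)
    (hU : ∀ i, U i = Submodule.span (ZMod p) (Set.range fun h : G => ρ h (u i)))
    (W : Fin s → Submodule (ZMod p) V)
    (hW : ∀ j, W j = Submodule.span (ZMod p)
      (⋃ x : G, (ρ x) '' (fixedPoints ρ (H j) : Set V)))
    (δ : ℝ)
    (hδdef : δ = 1 - (∑ i : Fin r, 1 / ((orderOf (g i) : ℝ) * ((d : ℝ) - 1)))
      - (∑ j : Fin s, (Fintype.card G : ℝ) /
          ((Nat.card (H j) : ℝ) * (Nat.card (Subgroup.normalizer (H j : Set G)) : ℝ)))) :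
    ((d : ℝ) - 1) * (Fintype.card G : ℝ) * δ ≤
      (Module.finrank (ZMod p) (V ⧸ ((⨆ i, U i) ⊔ (⨆ j, W j))) : ℝ) := by
  have hdim := le_finrank_quotient_add_sum_index e he hu H
  rw [← iSup_congr hU, ← iSup_congr hW] at hdim
  have hd' : ((d - 1 : ℕ) : ℝ) = d - 1 := by rw [Nat.cast_sub (by omega), Nat.cast_one]
  have hUsum :
      ((d : ℝ) - 1) * Fintype.card G * ∑ i, 1 / ((orderOf (g i) : ℝ) * ((d : ℝ) - 1)) =
        ∑ i, ((Subgroup.zpowers (g i)).index : ℝ) := by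
    have hd1 : (d : ℝ) - 1 ≠ 0 := by rw [← hd']; exact_mod_cast (by omega : d - 1 ≠ 0)
    rw [Finset.mul_sum]
    refine Finset.sum_congr rfl fun i _ => ?_
    rw [Subgroup.index_cast_eq_div, Nat.card_zpowers, Nat.card_eq_fintype_card]
    field_simp
  have hWsum : ((d : ℝ) - 1) * Fintype.card G * ∑ j, (Fintype.card G : ℝ) /
      ((Nat.card (H j) : ℝ) * (Nat.card (Subgroup.normalizer (H j : Set G)) : ℝ)) =
      ∑ j, ((Subgroup.normalizer (H j : Set G)).index : ℝ) * ((d - 1) * (H j).index) := by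
    rw [Finset.mul_sum]
    refine Finset.sum_congr rfl fun j _ => ?_
    rw [Subgroup.index_cast_eq_div, Subgroup.index_cast_eq_div, Nat.card_eq_fintype_card (α := G)]
    field_simp
  replace hdim := (Nat.cast_le (α := ℝ)).2 hdim
  push_cast [hd'] at hdim
  rw [hδdef]
  linarith

/-- Let `G` be a finite `d`-generated group, `p ∤ |G|`, and
`V_{T,p} ≅ 𝔽_p[G]^{d-1} ⊕ 1` the relation module (with representation `ρ`).  Given elements
`g_i = π(w_i)` together with `g_i`-fixed vectors `u_i` (the classes of `w_i^{ord(π(w_i))}`)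
and subgroups `H_1, …, H_s ≤ G`, if
`δ = 1 − Σ_i 1/(ord(π(w_i))(d−1)) − Σ_j |G|/(|H_j|·|N_G(H_j)|) > 0`, then the quotient `V`
of `V_{T,p}` by the submodules `U_i = ⟨u_i⟩_{𝔽_p[G]}` and `W_j = ⟨V_{T,p}^{H_j}⟩_{𝔽_p[G]}`
satisfies `dim V ≥ (d−1)|G|δ`. -/
theorem statement18 (p d : ℕ) [Fact p.Prime] (G : Type) [Group G] [Fintype G]
    (hp : ¬ p ∣ Fintype.card G) (hd : 2 ≤ d)
    (V : Type) [AddCommGroup V] [Module (ZMod p) V] [FiniteDimensional (ZMod p) V]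
    (ρ : Representation (ZMod p) G V)
    (e : V ≃ₗ[ZMod p] (Fin (d - 1) → MonoidAlgebra (ZMod p) G) × (ZMod p))
    (he : ∀ (g : G) (v : V),
      e (ρ g v) = (fun i => MonoidAlgebra.of (ZMod p) G g * (e v).1 i, (e v).2))
    (r s : ℕ) (g : Fin r → G) (u : Fin r → V)
    (hu : ∀ i, ρ (g i) (u i) = u i)
    (H : Fin s → Subgroup G)
    (U : Fin r → Submodule (ZMod p) V)
    (hU : ∀ i, U i = Submodule.span (ZMod p) (Set.range fun h : G => ρ h (u i)))
    (W : Fin s → Submodule (ZMod p) V)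
    (hW : ∀ j, W j = Submodule.span (ZMod p)
      (⋃ x : G, (ρ x) '' (fixedPoints ρ (H j) : Set V)))
    (δ : ℝ)
    (hδdef : δ = 1 - (∑ i : Fin r, 1 / ((orderOf (g i) : ℝ) * ((d : ℝ) - 1)))
      - (∑ j : Fin s, (Fintype.card G : ℝ) /
          ((Nat.card (H j) : ℝ) * (Nat.card (Subgroup.normalizer (H j : Set G)) : ℝ))))
    (hδ : 0 < δ) :
    ((d : ℝ) - 1) * (Fintype.card G : ℝ) * δ ≤
      (Module.finrank (ZMod p) (V ⧸ ((⨆ i, U i) ⊔ (⨆ j, W j))) : ℝ) :=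
  statement18_general p d G hd V ρ e he r s g u hu H U hU W hW δ hδdef
end
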